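/- Let G be a directed graph with distinct nodes s₁, t₁, s₂, t₂ that contains two vertex-disjoint directed paths P₁ from s₁ to t₁ and P₂ from s₂ to t₂. Construct G' by adding new nodes s₁', t₁', s₂', t₂' and arcs (s₁', s₁), (s₁', t₁'), (t₁, t₁'), (s₂', s₂), (s₂', t₂'), (t₂, t₂'), and two parallel arcs a, a' from t₁' to s₂'. Give every arc of G' nominal cost 0. Let P⁰ be the s₁'–t₂' path consisting of (s₁',s₁), P₁, (t₁,t₁'), a, (s₂',s₂), P₂, (t₂,t₂'). Then for every single arc e of G', after increasing the cost of e from 0 to 1, there exists a directed path P from s₁' to t₂' in G' with cost 0 and |P \ P⁰| ≤ 1. -/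

import Mathlib

/-- `l` is a directed walk from `s` to `t`, recorded as the list of its arcs, in a
multigraph whose arcs `E` have endpoints given by `src` and `tgt`. -/
def IsEWalk {V E : Type} (src tgt : E → V) (s t : V) (l : List E) : Prop :=
  l.map src ++ [t] = s :: l.map tgt

lemma ewalk_single {V E : Type} {src tgt : E → V} {s t : V} {x : E}
    (h1 : src x = s) (h2 : tgt x = t) : IsEWalk src tgt s t [x] := by
  subst h1 h2; rfl

lemma ewalk_append {V E : Type} {src tgt : E → V} {s t u : V} {l m : List E}
    (h1 : IsEWalk src tgt s t l) (h2 : IsEWalk src tgt t u m) :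
    IsEWalk src tgt s u (l ++ m) := by
  simp only [IsEWalk, List.map_append] at *
  rw [List.append_assoc, h2]
  rw [show t :: List.map tgt m = [t] ++ List.map tgt m from rfl, ← List.append_assoc, h1]
  rfl

set_option maxHeartbeats 1000000 in
/-- "yes"-instance direction of the reduction from 2-disjoint-paths:
in the graph `G'` (here: `G` together with the fresh nodes `s₁', t₁', s₂', t₂'`, the arcs
`e₁ = (s₁',s₁)`, `f₁ = (s₁',t₁')`, `g₁ = (t₁,t₁')`, `e₂ = (s₂',s₂)`, `f₂ = (s₂',t₂')`,
`g₂ = (t₂,t₂')` and the parallel arcs `a ≠ a'` from `t₁'` to `s₂'`), with vertex-disjoint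
paths `P₁ : s₁ → t₁` and `P₂ : s₂ → t₂` in `G`, and with
`P⁰ = e₁, P₁, g₁, a, e₂, P₂, g₂`: after raising the cost of any single arc `e` from `0`
to `1` there is a directed `s₁'`–`t₂'` path `P` of cost `0` with `|P \ P⁰| ≤ 1`. -/
theorem robust_incremental_SP_reduction_yes_direction
    (V E : Type) [DecidableEq V] [DecidableEq E] (src tgt : E → V)
    (s1 t1 s2 t2 s1' t1' s2' t2' : V)
    (hdist : ([s1, t1, s2, t2, s1', t1', s2', t2'] : List V).Nodup)
    (e1 f1 g1 e2 f2 g2 a a' : E)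
    (he1 : src e1 = s1' ∧ tgt e1 = s1) (hf1 : src f1 = s1' ∧ tgt f1 = t1')
    (hg1 : src g1 = t1 ∧ tgt g1 = t1') (he2 : src e2 = s2' ∧ tgt e2 = s2)
    (hf2 : src f2 = s2' ∧ tgt f2 = t2') (hg2 : src g2 = t2 ∧ tgt g2 = t2')
    (ha : src a = t1' ∧ tgt a = s2') (ha' : src a' = t1' ∧ tgt a' = s2')
    (haa' : a ≠ a')
    (P1 P2 : List E)
    (hP1 : IsEWalk src tgt s1 t1 P1) (hP2 : IsEWalk src tgt s2 t2 P2)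
    (hP1nd : (s1 :: P1.map tgt).Nodup) (hP2nd : (s2 :: P2.map tgt).Nodup)
    (hdisj : ∀ v ∈ s1 :: P1.map tgt, v ∉ s2 :: P2.map tgt)
    (hfresh1 : ∀ x ∈ P1, src x ∉ ([s1', t1', s2', t2'] : List V) ∧
      tgt x ∉ ([s1', t1', s2', t2'] : List V))
    (hfresh2 : ∀ x ∈ P2, src x ∉ ([s1', t1', s2', t2'] : List V) ∧
      tgt x ∉ ([s1', t1', s2', t2'] : List V)) :
    ∀ e : E, ∃ P : List E,
      IsEWalk src tgt s1' t2' P ∧ (s1' :: P.map tgt).Nodup ∧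
      (P.map fun x => if x = e then (1 : ℝ) else 0).sum = 0 ∧
      (P.toFinset \ (e1 :: P1 ++ [g1, a, e2] ++ P2 ++ [g2]).toFinset).card ≤ 1 := by
  intro e
  simp only [List.nodup_cons, List.mem_cons, List.mem_singleton, List.not_mem_nil,
    or_false, not_or, List.nodup_nil, and_true] at hdist
  obtain ⟨⟨hd1, hd2, hd3, hd4, hd5, hd6, hd7⟩, ⟨hd8, hd9, hd10, hd11, hd12, hd13⟩,
    ⟨hd14, hd15, hd16, hd17, hd18⟩, ⟨hd19, hd20, hd21, hd22⟩, ⟨hd23, hd24, hd25⟩,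
    ⟨hd26, hd27⟩, hd28, -⟩ := hdist
  -- fresh-vertex facts
  have hT1 : ∀ x ∈ P1, tgt x ≠ s1' ∧ tgt x ≠ t1' ∧ tgt x ≠ s2' ∧ tgt x ≠ t2' := by
    intro x hx; have := (hfresh1 x hx).2; simp at this; exact this
  have hS1 : ∀ x ∈ P1, src x ≠ s1' ∧ src x ≠ t1' ∧ src x ≠ s2' ∧ src x ≠ t2' := by
    intro x hx; have := (hfresh1 x hx).1; simp at this; exact this
  have hT2 : ∀ x ∈ P2, tgt x ≠ s1' ∧ tgt x ≠ t1' ∧ tgt x ≠ s2' ∧ tgt x ≠ t2' := by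
    intro x hx; have := (hfresh2 x hx).2; simp at this; exact this
  have hS2 : ∀ x ∈ P2, src x ≠ s1' ∧ src x ≠ t1' ∧ src x ≠ s2' ∧ src x ≠ t2' := by
    intro x hx; have := (hfresh2 x hx).1; simp at this; exact this
  -- disjointness facts
  have hdjT : ∀ x ∈ P1, ∀ y ∈ P2, tgt x ≠ tgt y := by
    intro x hx y hy h
    exact hdisj (tgt x) (List.mem_cons.2 (Or.inr (List.mem_map.2 ⟨x, hx, rfl⟩)))
      (List.mem_cons.2 (Or.inr (List.mem_map.2 ⟨y, hy, h.symm⟩)))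
  have hP12 : ∀ x ∈ P1, x ∉ P2 := by
    intro x hx hx2; exact hdjT x hx x hx2 rfl
  have hs1P2 : ∀ y ∈ P2, s1 ≠ tgt y := by
    intro y hy h
    exact hdisj s1 (List.mem_cons.2 (Or.inl rfl))
      (List.mem_cons.2 (Or.inr (List.mem_map.2 ⟨y, hy, h.symm⟩)))
  have hs2P1 : ∀ x ∈ P1, tgt x ≠ s2 := by
    intro x hx h
    exact hdisj (tgt x) (List.mem_cons.2 (Or.inr (List.mem_map.2 ⟨x, hx, rfl⟩)))
      (List.mem_cons.2 (Or.inl h))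
  -- arc membership facts
  have haP1 : a ∉ P1 := fun h => (hS1 a h).2.1 ha.1
  have haP2 : a ∉ P2 := fun h => (hS2 a h).2.1 ha.1
  have ha'P1 : a' ∉ P1 := fun h => (hS1 a' h).2.1 ha'.1
  have ha'P2 : a' ∉ P2 := fun h => (hS2 a' h).2.1 ha'.1
  have he1P1 : e1 ∉ P1 := fun h => (hS1 e1 h).1 he1.1
  have he1P2 : e1 ∉ P2 := fun h => (hS2 e1 h).1 he1.1
  have hf1P1 : f1 ∉ P1 := fun h => (hS1 f1 h).1 hf1.1
  have hf1P2 : f1 ∉ P2 := fun h => (hS2 f1 h).1 hf1.1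
  have hg1P1 : g1 ∉ P1 := fun h => (hT1 g1 h).2.1 hg1.2
  have hg1P2 : g1 ∉ P2 := fun h => (hT2 g1 h).2.1 hg1.2
  have he2P1 : e2 ∉ P1 := fun h => (hS1 e2 h).2.2.1 he2.1
  have he2P2 : e2 ∉ P2 := fun h => (hS2 e2 h).2.2.1 he2.1
  have hf2P1 : f2 ∉ P1 := fun h => (hS1 f2 h).2.2.1 hf2.1
  have hf2P2 : f2 ∉ P2 := fun h => (hS2 f2 h).2.2.1 hf2.1
  have hg2P1 : g2 ∉ P1 := fun h => (hT1 g2 h).2.2.2 hg2.2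
  have hg2P2 : g2 ∉ P2 := fun h => (hT2 g2 h).2.2.2 hg2.2
  -- named arc inequalities (via endpoints)
  have neST : ∀ {x y : E}, src x ≠ src y → x ≠ y := fun h hxy => h (hxy ▸ rfl)
  have neTT : ∀ {x y : E}, tgt x ≠ tgt y → x ≠ y := fun h hxy => h (hxy ▸ rfl)
  have ne_e1_g1 : e1 ≠ g1 := neTT (by rw [he1.2, hg1.2]; exact hd5)
  have ne_e1_a : e1 ≠ a := neST (by rw [he1.1, ha.1]; exact hd23)
  have ne_e1_a' : e1 ≠ a' := neST (by rw [he1.1, ha'.1]; exact hd23)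
  have ne_e1_e2 : e1 ≠ e2 := neST (by rw [he1.1, he2.1]; exact hd24)
  have ne_e1_f1 : e1 ≠ f1 := neTT (by rw [he1.2, hf1.2]; exact hd5)
  have ne_e1_f2 : e1 ≠ f2 := neST (by rw [he1.1, hf2.1]; exact hd24)
  have ne_e1_g2 : e1 ≠ g2 := neTT (by rw [he1.2, hg2.2]; exact hd7)
  have ne_g1_a : g1 ≠ a := neST (by rw [hg1.1, ha.1]; exact hd11)
  have ne_g1_a' : g1 ≠ a' := neST (by rw [hg1.1, ha'.1]; exact hd11)
  have ne_g1_e2 : g1 ≠ e2 := neST (by rw [hg1.1, he2.1]; exact hd12)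
  have ne_g1_f1 : g1 ≠ f1 := neST (by rw [hg1.1, hf1.1]; exact hd10)
  have ne_g1_f2 : g1 ≠ f2 := neST (by rw [hg1.1, hf2.1]; exact hd12)
  have ne_g1_g2 : g1 ≠ g2 := neST (by rw [hg1.1, hg2.1]; exact hd9)
  have ne_a_e2 : a ≠ e2 := neTT (by rw [ha.2, he2.2]; exact fun h => hd17 h.symm)
  have ne_a'_e2 : a' ≠ e2 := neTT (by rw [ha'.2, he2.2]; exact fun h => hd17 h.symm)
  have ne_a_g2 : a ≠ g2 := neTT (by rw [ha.2, hg2.2]; exact hd28)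
  have ne_a'_g2 : a' ≠ g2 := neTT (by rw [ha'.2, hg2.2]; exact hd28)
  have ne_a_f1 : a ≠ f1 := neST (by rw [ha.1, hf1.1]; exact fun h => hd23 h.symm)
  have ne_a_f2 : a ≠ f2 := neST (by rw [ha.1, hf2.1]; exact hd26)
  have ne_e2_g2 : e2 ≠ g2 := neST (by rw [he2.1, hg2.1]; exact fun h => hd21 h.symm)
  have ne_e2_f1 : e2 ≠ f1 := neST (by rw [he2.1, hf1.1]; exact fun h => hd24 h.symm)
  have ne_e2_f2 : e2 ≠ f2 := neTT (by rw [he2.2, hf2.2]; exact hd18)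
  have ne_g2_f1 : g2 ≠ f1 := neST (by rw [hg2.1, hf1.1]; exact hd19)
  have ne_g2_f2 : g2 ≠ f2 := neST (by rw [hg2.1, hf2.1]; exact hd21)
  -- cost helper
  have cost : ∀ (L : List E), e ∉ L → (L.map fun x => if x = e then (1:ℝ) else 0).sum = 0 := by
    intro L hL; apply List.sum_eq_zero; intro y hy
    simp only [List.mem_map] at hy; obtain ⟨x, hx, rfl⟩ := hy
    have hxe : x ≠ e := fun h => hL (by rw [← h]; exact hx)
    rw [if_neg hxe]
  -- card helper
  have cardle : ∀ (L M : List E) (z : E), (∀ x ∈ L, x ∈ M ∨ x = z) →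
      (L.toFinset \ M.toFinset).card ≤ 1 := by
    intro L M z h
    refine le_trans (Finset.card_le_card ?_) (Finset.card_singleton z).le
    intro x hx
    simp only [Finset.mem_sdiff, List.mem_toFinset, Finset.mem_singleton] at hx ⊢
    rcases h x hx.1 with h' | h'
    · exact absurd h' hx.2
    · exact h'
  -- nodup building blocks
  have nP1 : (P1.map tgt).Nodup := (List.nodup_cons.1 hP1nd).2
  have nP2 : (P2.map tgt).Nodup := (List.nodup_cons.1 hP2nd).2
  have hs1nP1m : s1 ∉ P1.map tgt := (List.nodup_cons.1 hP1nd).1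
  have hs2nP2m : s2 ∉ P2.map tgt := (List.nodup_cons.1 hP2nd).1
  have memT1 : ∀ v ∈ P1.map tgt, v ≠ s1' ∧ v ≠ t1' ∧ v ≠ s2' ∧ v ≠ t2' := by
    intro v hv; obtain ⟨x, hx, rfl⟩ := List.mem_map.1 hv; exact hT1 x hx
  have memT2 : ∀ v ∈ P2.map tgt, v ≠ s1' ∧ v ≠ t1' ∧ v ≠ s2' ∧ v ≠ t2' := by
    intro v hv; obtain ⟨x, hx, rfl⟩ := List.mem_map.1 hv; exact hT2 x hx
  have mS2P1 : ∀ v ∈ P1.map tgt, v ≠ s2 := by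
    intro v hv; obtain ⟨x, hx, rfl⟩ := List.mem_map.1 hv; exact hs2P1 x hx
  have s1nP2m : s1 ∉ P2.map tgt := by
    intro h; obtain ⟨x, hx, hxe⟩ := List.mem_map.1 h; exact hs1P2 x hx hxe.symm
  have hdjm : ∀ v ∈ P1.map tgt, v ∉ P2.map tgt := by
    intro v hv h
    obtain ⟨x, hx, rfl⟩ := List.mem_map.1 hv
    obtain ⟨y, hy, hye⟩ := List.mem_map.1 h
    exact hdjT x hx y hy hye.symm
  have s1'nP1m : s1' ∉ P1.map tgt := fun h => (memT1 _ h).1 rfl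
  have t1'nP1m : t1' ∉ P1.map tgt := fun h => (memT1 _ h).2.1 rfl
  have s2'nP1m : s2' ∉ P1.map tgt := fun h => (memT1 _ h).2.2.1 rfl
  have t2'nP1m : t2' ∉ P1.map tgt := fun h => (memT1 _ h).2.2.2 rfl
  have s1'nP2m : s1' ∉ P2.map tgt := fun h => (memT2 _ h).1 rfl
  have t1'nP2m : t1' ∉ P2.map tgt := fun h => (memT2 _ h).2.1 rfl
  have s2'nP2m : s2' ∉ P2.map tgt := fun h => (memT2 _ h).2.2.1 rfl
  have t2'nP2m : t2' ∉ P2.map tgt := fun h => (memT2 _ h).2.2.2 rfl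
  have hd4' : ¬s1' = s1 := fun h => hd4 h.symm
  have hd15' : ¬s1' = s2 := fun h => hd15 h.symm
  have hd16' : ¬t1' = s2 := fun h => hd16 h.symm
  have hd17' : ¬s2' = s2 := fun h => hd17 h.symm
  have hA : ∀ v ∈ P1.map tgt, ¬v = t1' ∧ ¬v = s2' ∧ ¬v = s2 := fun v hv =>
    ⟨(memT1 v hv).2.1, (memT1 v hv).2.2.1, mS2P1 v hv⟩
  have hA3 : ∀ v ∈ P1.map tgt, ¬v = t1' ∧ ¬v = s2' ∧ ¬v = t2' := fun v hv =>
    ⟨(memT1 v hv).2.1, (memT1 v hv).2.2.1, (memT1 v hv).2.2.2⟩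
  have hA2 : ∀ v ∈ P2.map tgt, ¬v = t2' := fun v hv => (memT2 v hv).2.2.2
  have hB : ∀ v, v ∈ P1.map tgt ∨ v = t1' ∨ v = s2' ∨ v = s2 → v ∉ P2.map tgt := by
    intro v hv
    rcases hv with h | rfl | rfl | rfl
    · exact hdjm _ h
    · exact t1'nP2m
    · exact s2'nP2m
    · exact hs2nP2m
  have hC : ∀ v, (v ∈ P1.map tgt ∨ v = t1' ∨ v = s2' ∨ v = s2) ∨ v ∈ P2.map tgt →
      ¬v = t2' := by
    intro v hv
    rcases hv with (h | rfl | rfl | rfl) | h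
    · exact (memT1 _ h).2.2.2
    · exact hd27
    · exact hd28
    · exact hd18
    · exact hA2 _ h
  -- walk pieces
  have wtail2 : IsEWalk src tgt s2' t2' ([e2] ++ P2 ++ [g2]) :=
    ewalk_append (ewalk_append (ewalk_single he2.1 he2.2) hP2) (ewalk_single hg2.1 hg2.2)
  have whead1 : IsEWalk src tgt s1' t1' ([e1] ++ P1 ++ [g1]) :=
    ewalk_append (ewalk_append (ewalk_single he1.1 he1.2) hP1) (ewalk_single hg1.1 hg1.2)
  by_cases hca : e = a
  · -- use a' instead of a
    refine ⟨e1 :: P1 ++ [g1, a', e2] ++ P2 ++ [g2], ?_, ?_, ?_, ?_⟩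
    · have w := ewalk_append (ewalk_append whead1 (ewalk_single ha'.1 ha'.2)) wtail2
      have heq : ([e1] ++ P1 ++ [g1]) ++ [a'] ++ ([e2] ++ P2 ++ [g2])
          = e1 :: P1 ++ [g1, a', e2] ++ P2 ++ [g2] := by simp
      rwa [heq] at w
    · simp only [List.cons_append, List.map_append, List.map_cons, List.map_nil,
        he1.2, hg1.2, ha'.2, he2.2, hg2.2, ha.2, hf1.2, hf2.2, List.nil_append]
      simp only [List.nodup_cons, List.nodup_append, List.mem_append, List.mem_cons,
        List.mem_singleton, List.not_mem_nil, or_false, not_or, List.nodup_nil,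
        List.disjoint_left, and_true, true_and]
      exact ⟨⟨hd4', ⟨⟨s1'nP1m, hd23, hd24, hd15'⟩, s1'nP2m⟩, hd25⟩,
        ⟨⟨⟨hs1nP1m, hd5, hd6, hd2⟩, s1nP2m⟩, hd7⟩,
        ⟨⟨nP1, ⟨⟨hd26, hd16'⟩, hd17', not_false⟩, (fun v hv b hb h => by have := hA v hv; subst h; tauto)⟩, nP2, (fun v hv b hb h => hB v hv (by rw [h]; exact hb))⟩,
        not_false, (fun v hv b hb h => hC v hv (h.trans hb))⟩
    · subst hca
      refine cost _ ?_
      have n1 : e ≠ e1 := Ne.symm ne_e1_a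
      have n3 : e ≠ g1 := Ne.symm ne_g1_a
      have n5 : e ≠ e2 := ne_a_e2
      intro hmem
      simp only [List.cons_append, List.append_assoc, List.mem_cons, List.mem_append,
        List.mem_singleton, List.not_mem_nil, or_false] at hmem
      rcases hmem with h | h | h | h | h | h | h | h <;>
        first
        | exact h.elim
        | exact n1 h
        | exact haP1 h
        | exact n3 h
        | exact haa' h
        | exact n5 h
        | exact haP2 h
        | exact ne_a_g2 h
    · refine cardle _ _ a' ?_
      intro x hx
      simp only [List.cons_append, List.append_assoc, List.mem_cons, List.mem_append,
        List.mem_singleton, List.not_mem_nil, or_false] at hx ⊢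
      rcases hx with h | h | h | h | h | h | h | h <;> first | exact h.elim | simp [h]
  by_cases hc1 : e = e1 ∨ e ∈ P1 ∨ e = g1
  · -- shortcut f1
    have h5 : e ≠ f1 ∧ e ≠ a ∧ e ≠ e2 ∧ e ∉ P2 ∧ e ≠ g2 := by
      rcases hc1 with rfl | h | rfl
      · exact ⟨ne_e1_f1, ne_e1_a, ne_e1_e2, he1P2, ne_e1_g2⟩
      · exact ⟨fun hh => hf1P1 (hh ▸ h), fun hh => haP1 (hh ▸ h),
          fun hh => he2P1 (hh ▸ h), hP12 e h, fun hh => hg2P1 (hh ▸ h)⟩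
      · exact ⟨ne_g1_f1, ne_g1_a, ne_g1_e2, hg1P2, ne_g1_g2⟩
    refine ⟨f1 :: a :: e2 :: P2 ++ [g2], ?_, ?_, ?_, ?_⟩
    · have w := ewalk_append (ewalk_append (ewalk_single hf1.1 hf1.2) (ewalk_single ha.1 ha.2)) wtail2
      have heq : (([f1] ++ [a]) ++ ([e2] ++ P2 ++ [g2])) = f1 :: a :: e2 :: P2 ++ [g2] := by simp
      rwa [heq] at w
    · simp only [List.cons_append, List.map_append, List.map_cons, List.map_nil,
        he1.2, hg1.2, ha'.2, he2.2, hg2.2, ha.2, hf1.2, hf2.2, List.nil_append]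
      simp only [List.nodup_cons, List.nodup_append, List.mem_append, List.mem_cons,
        List.mem_singleton, List.not_mem_nil, or_false, not_or, List.nodup_nil,
        List.disjoint_left, and_true, true_and]
      exact ⟨⟨hd23, hd24, hd15', s1'nP2m, hd25⟩, ⟨hd26, hd16', t1'nP2m, hd27⟩,
        ⟨hd17', s2'nP2m, hd28⟩, ⟨hs2nP2m, hd18⟩, nP2, not_false, (fun v hv b hb h => hA2 v hv (h.trans hb))⟩
    · refine cost _ ?_
      obtain ⟨n1, n2, n3, n4, n5⟩ := h5
      intro hmem
      simp only [List.mem_cons, List.mem_append, List.mem_singleton, List.not_mem_nil,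
        or_false] at hmem
      rcases hmem with (h | h | h | h) | h <;>
        first | exact n1 h | exact n2 h | exact n3 h | exact n4 h | exact n5 h
    · refine cardle _ _ f1 ?_
      intro x hx
      simp only [List.cons_append, List.append_assoc, List.mem_cons, List.mem_append,
        List.mem_singleton, List.not_mem_nil, or_false] at hx ⊢
      rcases hx with h | h | h | h | h <;> first | exact h.elim | simp [h]
  by_cases hc2 : e = e2 ∨ e ∈ P2 ∨ e = g2
  · -- shortcut f2
    have h5 : e ≠ e1 ∧ e ∉ P1 ∧ e ≠ g1 ∧ e ≠ a ∧ e ≠ f2 := by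
      rcases hc2 with rfl | h | rfl
      · exact ⟨Ne.symm ne_e1_e2, he2P1, Ne.symm ne_g1_e2, Ne.symm ne_a_e2, ne_e2_f2⟩
      · exact ⟨fun hh => he1P2 (hh ▸ h), fun hh => hP12 e hh h,
          fun hh => hg1P2 (hh ▸ h), fun hh => haP2 (hh ▸ h), fun hh => hf2P2 (hh ▸ h)⟩
      · exact ⟨Ne.symm ne_e1_g2, hg2P1, Ne.symm ne_g1_g2, Ne.symm ne_a_g2, ne_g2_f2⟩
    refine ⟨e1 :: P1 ++ [g1, a, f2], ?_, ?_, ?_, ?_⟩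
    · have w := ewalk_append (ewalk_append whead1 (ewalk_single ha.1 ha.2)) (ewalk_single hf2.1 hf2.2)
      have heq : (([e1] ++ P1 ++ [g1]) ++ [a] ++ [f2]) = e1 :: P1 ++ [g1, a, f2] := by simp
      rwa [heq] at w
    · simp only [List.cons_append, List.map_append, List.map_cons, List.map_nil,
        he1.2, hg1.2, ha'.2, he2.2, hg2.2, ha.2, hf1.2, hf2.2, List.nil_append]
      simp only [List.nodup_cons, List.nodup_append, List.mem_append, List.mem_cons,
        List.mem_singleton, List.not_mem_nil, or_false, not_or, List.nodup_nil,
        List.disjoint_left, and_true, true_and]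
      exact ⟨⟨hd4', s1'nP1m, hd23, hd24, hd25⟩, ⟨hs1nP1m, hd5, hd6, hd7⟩, nP1,
        ⟨⟨hd26, hd27⟩, hd28, not_false⟩, (fun v hv b hb h => by have := hA3 v hv; subst h; tauto)⟩
    · refine cost _ ?_
      obtain ⟨n1, n2, n3, n4, n5⟩ := h5
      intro hmem
      simp only [List.cons_append, List.mem_cons, List.mem_append, List.mem_singleton,
        List.not_mem_nil, or_false] at hmem
      rcases hmem with h | h | h | h | h <;>
        first | exact n1 h | exact n2 h | exact n3 h | exact n4 h | exact n5 h
    · refine cardle _ _ f2 ?_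
      intro x hx
      simp only [List.cons_append, List.append_assoc, List.mem_cons, List.mem_append,
        List.mem_singleton, List.not_mem_nil, or_false] at hx ⊢
      rcases hx with h | h | h | h | h <;> first | exact h.elim | simp [h]
  · -- the nominal path itself
    push_neg at hc1 hc2
    refine ⟨e1 :: P1 ++ [g1, a, e2] ++ P2 ++ [g2], ?_, ?_, ?_, ?_⟩
    · have w := ewalk_append (ewalk_append whead1 (ewalk_single ha.1 ha.2)) wtail2
      have heq : ([e1] ++ P1 ++ [g1]) ++ [a] ++ ([e2] ++ P2 ++ [g2])
          = e1 :: P1 ++ [g1, a, e2] ++ P2 ++ [g2] := by simp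
      rwa [heq] at w
    · simp only [List.cons_append, List.map_append, List.map_cons, List.map_nil,
        he1.2, hg1.2, ha'.2, he2.2, hg2.2, ha.2, hf1.2, hf2.2, List.nil_append]
      simp only [List.nodup_cons, List.nodup_append, List.mem_append, List.mem_cons,
        List.mem_singleton, List.not_mem_nil, or_false, not_or, List.nodup_nil,
        List.disjoint_left, and_true, true_and]
      exact ⟨⟨hd4', ⟨⟨s1'nP1m, hd23, hd24, hd15'⟩, s1'nP2m⟩, hd25⟩,
        ⟨⟨⟨hs1nP1m, hd5, hd6, hd2⟩, s1nP2m⟩, hd7⟩,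
        ⟨⟨nP1, ⟨⟨hd26, hd16'⟩, hd17', not_false⟩, (fun v hv b hb h => by have := hA v hv; subst h; tauto)⟩, nP2, (fun v hv b hb h => hB v hv (by rw [h]; exact hb))⟩,
        not_false, (fun v hv b hb h => hC v hv (h.trans hb))⟩
    · refine cost _ ?_
      obtain ⟨m1, m2, m3⟩ := hc1
      obtain ⟨m4, m5, m6⟩ := hc2
      intro hmem
      simp only [List.cons_append, List.append_assoc, List.mem_cons, List.mem_append,
        List.mem_singleton, List.not_mem_nil, or_false] at hmem
      rcases hmem with h | h | h | h | h | h | h | h <;>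
        first
        | exact h.elim
        | exact m1 h
        | exact m2 h
        | exact m3 h
        | exact hca h
        | exact m4 h
        | exact m5 h
        | exact m6 h
    · simp
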